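/- arXiv:2507.19986 — 4 statements merged into one kernel-verified Lean document; each statement's English description precedes it below -/
import Mathlib

section
/- Let a = -0.4527, b = 0.0218, c = 0.86 and define φ̃(x) = exp(a·x^c + b) for x > 0. If x > 0 and y > 0 satisfy the Gaussian-approximation odd-branch recursion φ̃(y) = 2·φ̃(x) − φ̃(x)², then y^c − x^c ≥ (ln 2)/a; equivalently, the decrease of the c-th power of the LLR mean in one odd polarization step is at most |ln 2 / a|. -/
open Real

theorem le_log_two_add_of_exp_eq_two_mul_sub_sq {u v : ℝ}
    (h : exp v = 2 * exp u - exp u ^ 2) : v ≤ log 2 + u := by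
  have hle : exp v ≤ exp (log 2 + u) := by
    rw [exp_add, exp_log two_pos]
    nlinarith [sq_nonneg (exp u)]
  exact exp_le_exp.mp hle

theorem log_two_div_le_sub_of_exp_affine_eq {a b s t : ℝ} (ha : a < 0)
    (h : exp (a * s + b) = 2 * exp (a * t + b) - exp (a * t + b) ^ 2) :
    log 2 / a ≤ s - t := by
  have hstep := le_log_two_add_of_exp_eq_two_mul_sub_sq h
  rw [div_le_iff_of_neg ha]
  linarith

theorem ga_odd_branch_rpow_decrease_general (x y : ℝ)
    (hrec : Real.exp ((-0.4527) * y ^ (0.86 : ℝ) + 0.0218) =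
        2 * Real.exp ((-0.4527) * x ^ (0.86 : ℝ) + 0.0218) -
          (Real.exp ((-0.4527) * x ^ (0.86 : ℝ) + 0.0218)) ^ 2) :
    y ^ (0.86 : ℝ) - x ^ (0.86 : ℝ) ≥ Real.log 2 / (-0.4527) :=
  log_two_div_le_sub_of_exp_affine_eq (by norm_num) hrec

/-- Gaussian-approximation odd-branch step: if `φ̃(y) = 2 φ̃(x) − φ̃(x)²` with
`φ̃(x) = exp(a x^c + b)`, `(a,b,c) = (−0.4527, 0.0218, 0.86)`, then
`y^c − x^c ≥ (ln 2)/a`. -/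
theorem ga_odd_branch_rpow_decrease (x y : ℝ) (hx : 0 < x) (hy : 0 < y)
    (hrec : Real.exp ((-0.4527) * y ^ (0.86 : ℝ) + 0.0218) =
        2 * Real.exp ((-0.4527) * x ^ (0.86 : ℝ) + 0.0218) -
          (Real.exp ((-0.4527) * x ^ (0.86 : ℝ) + 0.0218)) ^ 2) :
    y ^ (0.86 : ℝ) - x ^ (0.86 : ℝ) ≥ Real.log 2 / (-0.4527) :=
  ga_odd_branch_rpow_decrease_general x y hrec
end

section
/- Let K = 3.73 and ζ > 0. Let s ≤ n be natural numbers, m : ℕ → ℝ a sequence, and p : ℕ → {0,1} a bit sequence. Assume: (i) for every i with s ≤ i < n, if p(i+1) = 0 then m(i+1) ≥ m(i) − K·ln 2, and if p(i+1) = 1 then m(i+1) = 2·m(i); (ii) m(i) ≥ −K·ln ζ for every i with s ≤ i ≤ n. Then m(n) ≥ −K·(n−s)·ln 2 − K·ln(ζ/2)·(Σ_{i=s+1}^{n} p(i)) − K·ln ζ. -/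
open Real Finset

theorem sub_sum_Icc_le_of_forall_sub_le {α : Type*} [AddCommGroup α] [PartialOrder α]
    [IsOrderedAddMonoid α] {m d : ℕ → α} {s n : ℕ} (hsn : s ≤ n)
    (hstep : ∀ i, s ≤ i → i < n → m i - d (i + 1) ≤ m (i + 1)) :
    m s - ∑ i ∈ Icc (s + 1) n, d i ≤ m n := by
  induction n, hsn using Nat.le_induction with
  | base => simp
  | succ n hsn ih =>
    rw [sum_Icc_succ_top (by omega), ← sub_sub]
    calc m s - ∑ i ∈ Icc (s + 1) n, d i - d (n + 1)
        ≤ m n - d (n + 1) := by gcongr; exact ih fun i hi hin => hstep i hi (by omega)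
      _ ≤ m (n + 1) := hstep n hsn (by omega)

/-- Recursive lower bound on the LLR mean of a splitting channel: with `K = 3.73`, an odd step
(`p = 0`) decreases the LLR mean by at most `K ln 2`, an even step (`p = 1`) doubles it, and
if the trajectory stays in `T_s(ζ)`, then
`m(n) ≥ −K(n−s) ln 2 − K ln(ζ/2) Σ_{i=s+1}^n p(i) − K ln ζ`. -/
theorem ga_recursion_lower_bound (ζ : ℝ) (hζ : 0 < ζ) (s n : ℕ) (hsn : s ≤ n)
    (m : ℕ → ℝ) (p : ℕ → ℕ) (hp : ∀ i, p i = 0 ∨ p i = 1)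
    (hstep : ∀ i, s ≤ i → i < n →
      (p (i + 1) = 0 → m (i + 1) ≥ m i - 3.73 * Real.log 2) ∧
      (p (i + 1) = 1 → m (i + 1) = 2 * m i))
    (hT : ∀ i, s ≤ i → i ≤ n → m i ≥ -3.73 * Real.log ζ) :
    m n ≥ -3.73 * ((n : ℝ) - s) * Real.log 2
        - 3.73 * Real.log (ζ / 2) * (∑ i ∈ Finset.Icc (s + 1) n, (p i : ℝ))
        - 3.73 * Real.log ζ := by
  have hlog : Real.log (ζ / 2) = Real.log ζ - Real.log 2 := Real.log_div hζ.ne' two_ne_zero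
  -- A doubling step from `m i ≥ -K ln ζ` loses at most `K ln ζ = K ln 2 + K ln (ζ/2)`.
  set d : ℕ → ℝ := fun i => 3.73 * Real.log 2 + 3.73 * Real.log (ζ / 2) * p i with hd
  have hdrop : ∀ i, s ≤ i → i < n → m i - d (i + 1) ≤ m (i + 1) := by
    intro i hsi hin
    rcases hp (i + 1) with hp0 | hp1
    · simpa [hd, hp0] using (hstep i hsi hin).1 hp0
    · have := hT i hsi hin.le
      simp only [hd, hp1, (hstep i hsi hin).2 hp1, hlog]
      push_cast
      linarith
  have hsum : ∑ i ∈ Icc (s + 1) n, d i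
      = 3.73 * ((n : ℝ) - s) * Real.log 2
        + 3.73 * Real.log (ζ / 2) * ∑ i ∈ Icc (s + 1) n, (p i : ℝ) := by
    rw [sum_add_distrib, sum_const, ← mul_sum, Nat.card_Icc, nsmul_eq_mul,
      Nat.cast_sub (by omega)]
    push_cast
    ring
  have := sub_sum_Icc_le_of_forall_sub_le hsn hdrop
  linarith [hT s le_rfl hsn]
end

section
/- Let K = 3.73 and ζ = 2^{-4}. Let s ≤ n be natural numbers, m : ℕ → ℝ, and p : ℕ → {0,1}. Assume: (i) for every i with s ≤ i < n, if p(i+1) = 0 then m(i+1) ≥ m(i) − K·ln 2, and if p(i+1) = 1 then m(i+1) = 2·m(i); (ii) m(i) ≥ 4·K·ln 2 (= −K·ln ζ) for every i with s ≤ i ≤ n; (iii) Σ_{i=s+1}^{n} p(i) ≥ (1/2 − 1/20)·(n−s) = (9/20)·(n−s). Then m(n) ≥ 4.66·n·ln 2 − 4.66·s·ln 2 + 14.92·ln 2. -/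
/-!
With `K = 3.73`, each odd step loses at most `K ln 2` and each doubling step gains at least the floor
`4 K ln 2` of the trajectory, i.e. `5 K ln 2` more than an odd step. Telescoping from `s`
gives `m(n) ≥ 4 K ln 2 − K ln 2 (n − s) + 5 K ln 2 ∑ p(i)`, and at least `9/20` of the
steps double, so `m(n) − 4 K ln 2 ≥ (5 · 9/20 − 1) K ln 2 (n − s) = 4.6625 ln 2 (n − s)`.
-/

open Real Finset

theorem add_sum_Icc_le_of_forall_add_le_succ {s n : ℕ} (hsn : s ≤ n) {m d : ℕ → ℝ}
    (h : ∀ i, s ≤ i → i < n → m i + d (i + 1) ≤ m (i + 1)) :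
    m s + ∑ i ∈ Icc (s + 1) n, d i ≤ m n := by
  induction n, hsn using Nat.le_induction with
  | base => simp
  | succ k hsk ih =>
    rw [sum_Icc_succ_top (by omega), ← add_assoc]
    exact (add_le_add_left (ih fun i hsi hik => h i hsi (by omega)) _).trans
      (h k hsk (by omega))

theorem sum_Icc_mul_sub (s n : ℕ) (hsn : s ≤ n) (a c : ℝ) (f : ℕ → ℝ) :
    ∑ i ∈ Icc (s + 1) n, (c * f i - a) = c * ∑ i ∈ Icc (s + 1) n, f i - a * ((n : ℝ) - s) := by
  rw [sum_sub_distrib, ← mul_sum, sum_const, Nat.card_Icc, nsmul_eq_mul,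
    Nat.cast_sub (by omega)]
  push_cast
  ring

theorem le_of_forall_sub_add_mul_le_succ {s n : ℕ} (hsn : s ≤ n) {m p : ℕ → ℝ} {a c : ℝ}
    (h : ∀ i, s ≤ i → i < n → m i - a + c * p (i + 1) ≤ m (i + 1)) :
    m s - a * ((n : ℝ) - s) + c * ∑ i ∈ Icc (s + 1) n, p i ≤ m n := by
  have := add_sum_Icc_le_of_forall_add_le_succ (m := m) (d := fun i => c * p i - a) hsn
    fun i hsi hin => by linarith [h i hsi hin]
  rw [sum_Icc_mul_sub s n hsn] at this
  linarith

/-- Specialization of the Gaussian-approximation recursion bound to `ζ = 2^{−4}`, `η = 1/20`: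
if odd steps lose at most `3.73 ln 2`, even steps double, the trajectory stays above
`4 · 3.73 · ln 2 = 14.92 ln 2`, and the fraction of doubling steps is at least `9/20`, then
`m(n) ≥ 4.66 n ln 2 − 4.66 s ln 2 + 14.92 ln 2`. -/
theorem ga_recursion_bound_specialized (s n : ℕ) (hsn : s ≤ n)
    (m : ℕ → ℝ) (p : ℕ → ℕ) (hp : ∀ i, p i = 0 ∨ p i = 1)
    (hstep : ∀ i, s ≤ i → i < n →
      (p (i + 1) = 0 → m (i + 1) ≥ m i - 3.73 * Real.log 2) ∧
      (p (i + 1) = 1 → m (i + 1) = 2 * m i))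
    (hT : ∀ i, s ≤ i → i ≤ n → m i ≥ 4 * 3.73 * Real.log 2)
    (hU : (∑ i ∈ Finset.Icc (s + 1) n, (p i : ℝ)) ≥ (9 / 20) * ((n : ℝ) - s)) :
    m n ≥ 4.66 * (n : ℝ) * Real.log 2 - 4.66 * (s : ℝ) * Real.log 2 + 14.92 * Real.log 2 := by
  have hlog : 0 < log 2 := log_pos one_lt_two
  have hgain : ∀ i, s ≤ i → i < n →
      m i - 3.73 * log 2 + 18.65 * log 2 * (p (i + 1) : ℝ) ≤ m (i + 1) := by
    intro i hsi hin
    obtain ⟨hodd, heven⟩ := hstep i hsi hin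
    rcases hp (i + 1) with h | h
    · rw [h, Nat.cast_zero, mul_zero]
      linarith [hodd h]
    · rw [h, Nat.cast_one, mul_one]
      linarith [heven h, hT i hsi hin.le]
  have hwalk := le_of_forall_sub_add_mul_le_succ (p := fun i => (p i : ℝ)) hsn hgain
  have hns : (0 : ℝ) ≤ (n : ℝ) - s := sub_nonneg.mpr (by exact_mod_cast hsn)
  nlinarith [hT s le_rfl hsn, mul_le_mul_of_nonneg_left hU hlog.le, mul_nonneg hlog.le hns]
end

section
/- Let s ≤ n be natural numbers and let m be a real number with m ≥ 4.66·n·ln 2 − 4.66·s·ln 2 + 14.92·ln 2. Then the bit error rate under Gaussian approximation satisfies Q(√(m/2)) < 2^{−2.33(n−s)/2 − 3.73}, where Q(x) = (1/√(2π)) ∫_{x}^{∞} e^{−t²/2} dt. In particular, the error probability of the corresponding splitting channel of a polar code of length N = 2^n decays as O(N^{−2.33/2}). -/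
/-!
Since `t / x ≥ 1` on `(x, ∞)` and `t e^{-t²/2}` has the explicit antiderivative `-e^{-t²/2}`,
`∫_x^∞ e^{-t²/2} dt ≤ e^{-x²/2} / x`; with `x ≥ 1` and `1/√(2π) < 1` this gives
`Q(x) < e^{-x²/2}`. At `x = √(m/2)` the right side is `e^{-m/4}`, and the lower bound on `m`
is exactly `e^{-m/4} ≤ 2^{-2.33(n-s)/2 - 3.73}`.
-/

open Real MeasureTheory

/-- The Gaussian Q-function: the tail of the standard normal distribution. -/
noncomputable def gaussQ (x : ℝ) : ℝ :=
  (1 / Real.sqrt (2 * Real.pi)) * ∫ t in Set.Ioi x, Real.exp (-t ^ 2 / 2)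

lemma integrable_exp_neg_sq_div_two : Integrable fun t : ℝ => exp (-t ^ 2 / 2) := by
  simpa only [neg_div, neg_mul, one_div, inv_mul_eq_div] using
    integrable_exp_neg_mul_sq (b := (1 / 2 : ℝ)) (by norm_num)

lemma integrable_mul_exp_neg_sq_div_two : Integrable fun t : ℝ => t * exp (-t ^ 2 / 2) := by
  simpa only [neg_div, neg_mul, one_div, inv_mul_eq_div] using
    integrable_mul_exp_neg_mul_sq (b := (1 / 2 : ℝ)) (by norm_num)

lemma integral_Ioi_mul_exp_neg_sq_div_two (x : ℝ) :
    ∫ t in Set.Ioi x, t * exp (-t ^ 2 / 2) = exp (-x ^ 2 / 2) := by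
  have hderiv (t : ℝ) : HasDerivAt (fun t : ℝ => -exp (-t ^ 2 / 2)) (t * exp (-t ^ 2 / 2)) t := by
    refine (((hasDerivAt_pow 2 t).neg.div_const 2).exp.neg).congr_deriv ?_
    simp only [Pi.neg_apply, Nat.cast_ofNat]
    ring
  have htendsto : Filter.Tendsto (fun t : ℝ => -exp (-t ^ 2 / 2)) Filter.atTop (nhds 0) := by
    have hsq : Filter.Tendsto (fun t : ℝ => -t ^ 2 / 2) Filter.atTop Filter.atBot := by
      simp_rw [neg_div]
      exact Filter.tendsto_neg_atTop_atBot.comp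
        ((Filter.tendsto_pow_atTop two_ne_zero).atTop_div_const two_pos)
    simpa using (tendsto_exp_atBot.comp hsq).neg
  simpa using integral_Ioi_of_hasDerivAt_of_tendsto' (fun t _ => hderiv t)
    integrable_mul_exp_neg_sq_div_two.integrableOn htendsto

lemma integral_Ioi_exp_neg_sq_div_two_le {x : ℝ} (hx : 0 < x) :
    ∫ t in Set.Ioi x, exp (-t ^ 2 / 2) ≤ exp (-x ^ 2 / 2) / x := by
  rw [le_div_iff₀ hx, ← integral_Ioi_mul_exp_neg_sq_div_two, ← integral_mul_const]
  refine setIntegral_mono_on (integrable_exp_neg_sq_div_two.mul_const x).integrableOn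
    integrable_mul_exp_neg_sq_div_two.integrableOn measurableSet_Ioi fun t ht => ?_
  rw [mul_comm]
  exact mul_le_mul_of_nonneg_right ht.le (exp_pos _).le

lemma gaussQ_lt_exp {x : ℝ} (hx : 1 ≤ x) : gaussQ x < exp (-x ^ 2 / 2) := by
  have hsqrt : 1 < √(2 * π) := by
    rw [lt_sqrt zero_le_one]
    linarith [pi_gt_three]
  have htail : ∫ t in Set.Ioi x, exp (-t ^ 2 / 2) ≤ exp (-x ^ 2 / 2) :=
    (integral_Ioi_exp_neg_sq_div_two_le (by linarith)).trans (div_le_self (exp_pos _).le hx)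
  calc gaussQ x ≤ (1 / √(2 * π)) * exp (-x ^ 2 / 2) :=
        mul_le_mul_of_nonneg_left htail (by positivity)
    _ < 1 * exp (-x ^ 2 / 2) :=
        mul_lt_mul_of_pos_right ((div_lt_one (by linarith)).mpr hsqrt) (exp_pos _)
    _ = exp (-x ^ 2 / 2) := one_mul _

/-- If the LLR mean satisfies `m ≥ 4.66 n ln 2 − 4.66 s ln 2 + 14.92 ln 2`, the
Gaussian-approximation bit error rate satisfies
`Q(√(m/2)) < 2^{−2.33(n−s)/2 − 3.73}`, i.e. it decays as `O(N^{−2.33/2})` for `N = 2^n`. -/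
theorem ga_ber_bound (s n : ℕ) (hsn : s ≤ n) (m : ℝ)
    (hm : m ≥ 4.66 * (n : ℝ) * Real.log 2 - 4.66 * (s : ℝ) * Real.log 2 + 14.92 * Real.log 2) :
    gaussQ (Real.sqrt (m / 2)) < (2 : ℝ) ^ (-(2.33 * ((n : ℝ) - s)) / 2 - 3.73) := by
  have hlog : 0.693 < log 2 := by linarith [log_two_gt_d9]
  have hns : (s : ℝ) ≤ n := by exact_mod_cast hsn
  have hm2 : 2 ≤ m := by nlinarith
  have hsq : √(m / 2) ^ 2 = m / 2 := sq_sqrt (by linarith)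
  have hx : 1 ≤ √(m / 2) := by
    rw [le_sqrt zero_le_one (by linarith)]
    linarith
  calc gaussQ √(m / 2) < exp (-√(m / 2) ^ 2 / 2) := gaussQ_lt_exp hx
    _ ≤ (2 : ℝ) ^ (-(2.33 * ((n : ℝ) - s)) / 2 - 3.73) := by
        rw [rpow_def_of_pos two_pos, exp_le_exp, hsq]
        linarith
end
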